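/- Let ρ₁ and ρ₂ be non-atomic Borel probability measures on [0,∞) with finite first moments, let W : [0,1] → [0,∞) be bounded and measurable, and set K_W(t) = ∫_0^t W(u) du. Then Φ_W(ρ₁) − Φ_W(ρ₂) = −∫_0^∞ ( K_W(F_{ρ₁}(r)) − K_W(F_{ρ₂}(r)) ) dr. -/

import Mathlib

/-!
Since `ρ` has no atoms, its distribution function `F` is continuous and pushes `ρ` forward to
Lebesgue measure on `[0,1]`; in particular `{r | s < r}` and `{r | F s < F r}` agree `ρ`-a.e.
The layer-cake formula for the measure `W (F r) dρ(r)` therefore gives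
`Φ_W(ρ) = ∫_0^∞ ∫_{F s}^1 W = ∫_0^∞ (K_W 1 - K_W (F s)) ds`, a finite integral when `ρ` has a
first moment and `W` is bounded. Subtracting these formulas for `ρ₁` and `ρ₂` gives the theorem.
-/

open MeasureTheory Set

/-- The cumulative distribution function `F_ρ(r) = ρ([0,r])` (as `ρ` is supported on `[0,∞)`,
`ρ((-∞,r]) = ρ([0,r])`). -/
noncomputable def cdf (ρ : Measure ℝ) (r : ℝ) : ℝ := (ρ (Iic r)).toReal

/-- The robust functional `Φ_W(ρ) = ∫ r W(F_ρ(r)) dρ(r)`. -/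
noncomputable def PhiW (W : ℝ → ℝ) (ρ : Measure ℝ) : ℝ := ∫ r, r * W (cdf ρ r) ∂ρ

open Filter Topology

section cdf

variable (ρ : Measure ℝ) [IsProbabilityMeasure ρ]

lemma cdf_eq_probabilityTheory_cdf : cdf ρ = ProbabilityTheory.cdf ρ := by
  ext r
  rw [ProbabilityTheory.cdf_eq_real]
  rfl

lemma ofReal_cdf (r : ℝ) : ENNReal.ofReal (cdf ρ r) = ρ (Iic r) := by
  rw [cdf_eq_probabilityTheory_cdf, ProbabilityTheory.ofReal_cdf]

lemma cdf_mem_Icc (r : ℝ) : cdf ρ r ∈ Icc (0 : ℝ) 1 := by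
  rw [cdf_eq_probabilityTheory_cdf]
  exact ⟨ProbabilityTheory.cdf_nonneg ρ r, ProbabilityTheory.cdf_le_one ρ r⟩

lemma monotone_cdf : Monotone (cdf ρ) := by
  rw [cdf_eq_probabilityTheory_cdf]
  exact ProbabilityTheory.monotone_cdf ρ

lemma Ioc_cdf_subset_Icc (s : ℝ) : Ioc (cdf ρ s) 1 ⊆ Icc 0 1 :=
  fun _ hu => ⟨(cdf_mem_Icc ρ s).1.trans hu.1.le, hu.2⟩

lemma continuous_cdf [NullSingletonClass ρ] : Continuous (cdf ρ) := by
  rw [cdf_eq_probabilityTheory_cdf, continuous_iff_continuousAt]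
  intro a
  set F := ProbabilityTheory.cdf ρ
  have hatom : ENNReal.ofReal (F a - Function.leftLim F a) = 0 := by
    rw [← StieltjesFunction.measure_singleton, ProbabilityTheory.measure_cdf, measure_singleton]
  rw [F.mono.continuousAt_iff_leftLim_eq_rightLim, F.rightLim_eq]
  exact le_antisymm (F.mono.leftLim_le le_rfl) (by simpa [sub_nonpos] using hatom)

lemma measure_cdf_preimage_Iic [NullSingletonClass ρ] (t : ℝ) :
    ρ (cdf ρ ⁻¹' Iic t) = ENNReal.ofReal (min t 1) := by
  rcases le_or_gt 1 t with ht | ht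
  · rw [min_eq_right ht, ENNReal.ofReal_one, ← measure_univ (μ := ρ)]
    exact congrArg ρ (eq_univ_of_forall fun r => (cdf_mem_Icc ρ r).2.trans ht)
  rw [min_eq_left ht.le]
  -- `{r | F r ≤ t}` is a closed down-set, hence empty or `Iic a` with `F a = t` by continuity.
  set S := cdf ρ ⁻¹' Iic t
  have hF := continuous_cdf ρ
  rcases S.eq_empty_or_nonempty with hS | hS
  · have hbot : ∀ r, t ≤ cdf ρ r := fun r => (not_lt.1 fun hr => hS.subset hr.le)
    have : t ≤ 0 := by
      refine ge_of_tendsto' (x := atBot) ?_ hbot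
      rw [cdf_eq_probabilityTheory_cdf]
      exact ProbabilityTheory.tendsto_cdf_atBot ρ
    rw [hS, measure_empty, ENNReal.ofReal_of_nonpos this]
  obtain ⟨r₀, hr₀⟩ : ∃ r₀, t < cdf ρ r₀ := by
    have : Tendsto (cdf ρ) atTop (𝓝 1) := by
      rw [cdf_eq_probabilityTheory_cdf]
      exact ProbabilityTheory.tendsto_cdf_atTop ρ
    exact (this.eventually (lt_mem_nhds ht)).exists
  have hbdd : BddAbove S := ⟨r₀, fun _ hr => ((monotone_cdf ρ).reflect_lt (hr.trans_lt hr₀)).le⟩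
  set a := sSup S
  have haS : a ∈ S := (isClosed_le hF continuous_const).csSup_mem hS hbdd
  have hSa : S = Iic a := Subset.antisymm (fun r hr => le_csSup hbdd hr)
    fun r hr => (monotone_cdf ρ hr).trans haS
  have hFa : cdf ρ a = t := by
    refine le_antisymm haS (ge_of_tendsto (hF.continuousAt.tendsto.mono_left nhdsWithin_le_nhds :
      Tendsto (cdf ρ) (𝓝[>] a) _) ?_)
    filter_upwards [self_mem_nhdsWithin] with r hr
    exact (lt_of_not_ge fun h => hr.not_ge (le_csSup hbdd h)).le
  rw [hSa, ← ofReal_cdf, hFa]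

lemma map_cdf [NullSingletonClass ρ] : ρ.map (cdf ρ) = volume.restrict (Icc 0 1) := by
  refine Measure.ext_of_Iic _ _ fun t => ?_
  have hinter : Iic t ∩ Icc (0 : ℝ) 1 = Icc 0 (min t 1) := by
    ext x
    simp only [mem_inter_iff, mem_Iic, mem_Icc, le_min_iff]
    tauto
  rw [Measure.map_apply (continuous_cdf ρ).measurable measurableSet_Iic,
    Measure.restrict_apply measurableSet_Iic, hinter, Real.volume_Icc, sub_zero,
    measure_cdf_preimage_Iic]

lemma setLIntegral_Ioi_comp_cdf [NullSingletonClass ρ] {G : ℝ → ENNReal} (hG : Measurable G)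
    (s : ℝ) : ∫⁻ r in Ioi s, G (cdf ρ r) ∂ρ = ∫⁻ u in Ioc (cdf ρ s) 1, G u := by
  have hF := (continuous_cdf ρ).measurable
  have hae : cdf ρ ⁻¹' Ioi (cdf ρ s) =ᵐ[ρ] Ioi s := by
    have hsub : cdf ρ ⁻¹' Ioi (cdf ρ s) ⊆ Ioi s := fun _ hr => (monotone_cdf ρ).reflect_lt hr
    refine ae_eq_of_subset_of_measure_ge hsub (le_of_eq ?_)
      (hF measurableSet_Ioi).nullMeasurableSet (measure_ne_top _ _)
    rw [← compl_Iic, ← compl_Iic, preimage_compl, prob_compl_eq_one_sub (hF measurableSet_Iic),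
      prob_compl_eq_one_sub measurableSet_Iic, measure_cdf_preimage_Iic,
      min_eq_left (cdf_mem_Icc ρ s).2, ofReal_cdf]
  rw [← setLIntegral_congr hae, ← setLIntegral_map measurableSet_Ioi hG hF, map_cdf,
    Measure.restrict_restrict measurableSet_Ioi]
  congr 2
  ext u
  exact ⟨fun hu => ⟨hu.1, hu.2.2⟩, fun hu => ⟨hu.1, Ioc_cdf_subset_Icc ρ s hu⟩⟩

end cdf

lemma lintegral_ofReal_mul_eq_lintegral_setLIntegral_Ioi (ρ : Measure ℝ) {G : ℝ → ENNReal}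
    (hG : Measurable G) :
    ∫⁻ r, ENNReal.ofReal r * G r ∂ρ = ∫⁻ s in Ioi 0, ∫⁻ r in Ioi s, G r ∂ρ := by
  -- layer cake for the measure `G ∂ρ`, applied to `max r 0`, which has the same `ofReal`
  have hlayer := lintegral_eq_lintegral_meas_lt (ρ.withDensity G) (f := fun r => max r 0)
    (ae_of_all _ fun r => le_max_right r 0) (measurable_id.max measurable_const).aemeasurable
  rw [lintegral_withDensity_eq_lintegral_mul _ hG (by fun_prop)] at hlayer
  calc ∫⁻ r, ENNReal.ofReal r * G r ∂ρ
      = ∫⁻ r, (G * fun r => ENNReal.ofReal (max r 0)) r ∂ρ := by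
        congr 1; ext r; simp [mul_comm]
    _ = ∫⁻ s in Ioi 0, ρ.withDensity G {r | s < max r 0} := hlayer
    _ = ∫⁻ s in Ioi 0, ∫⁻ r in Ioi s, G r ∂ρ := by
        refine setLIntegral_congr_fun measurableSet_Ioi fun s (hs : 0 < s) => ?_
        have : {r : ℝ | s < max r 0} = Ioi s := by
          ext r; simp [hs.not_gt]
        rw [this, withDensity_apply _ measurableSet_Ioi]

lemma setIntegral_Ioc_eq_sub {W : ℝ → ℝ} {a b t : ℝ} (hW : IntegrableOn W (Icc a b))
    (ht : t ∈ Icc a b) : ∫ u in Ioc t b, W u = (∫ u in a..b, W u) - ∫ u in a..t, W u := by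
  have hint : ∀ c ∈ Icc a b, IntervalIntegrable W volume a c := fun c hc =>
    (hW.mono_set (by rw [uIcc_of_le hc.1]; exact Icc_subset_Icc le_rfl hc.2)).intervalIntegrable
  rw [intervalIntegral.integral_interval_sub_left (hint b ⟨ht.1.trans ht.2, le_rfl⟩) (hint t ht),
    intervalIntegral.integral_of_le ht.2]

section PhiW

variable {ρ : Measure ℝ} [IsProbabilityMeasure ρ] {W : ℝ → ℝ}

lemma setIntegral_Ioc_cdf_nonneg (hWnn : ∀ t ∈ Icc (0 : ℝ) 1, 0 ≤ W t) (s : ℝ) :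
    0 ≤ ∫ u in Ioc (cdf ρ s) 1, W u :=
  setIntegral_nonneg measurableSet_Ioc fun u hu => hWnn u (Ioc_cdf_subset_Icc ρ s hu)

lemma antitone_setIntegral_Ioc_cdf (hW : IntegrableOn W (Icc 0 1))
    (hWnn : ∀ t ∈ Icc (0 : ℝ) 1, 0 ≤ W t) : Antitone fun s => ∫ u in Ioc (cdf ρ s) 1, W u :=
  fun s _ hss' => setIntegral_mono_set (hW.mono_set (Ioc_cdf_subset_Icc ρ s))
    (ae_restrict_of_forall_mem measurableSet_Ioc fun u hu => hWnn u (Ioc_cdf_subset_Icc ρ s hu))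
    (Ioc_subset_Ioc_left (monotone_cdf ρ hss')).eventuallyLE

variable [NullSingletonClass ρ]

lemma lintegral_ofReal_mul_comp_cdf (hWmeas : Measurable W) (hW : IntegrableOn W (Icc 0 1))
    (hWnn : ∀ t ∈ Icc (0 : ℝ) 1, 0 ≤ W t) :
    ∫⁻ r, ENNReal.ofReal r * ENNReal.ofReal (W (cdf ρ r)) ∂ρ =
      ∫⁻ s in Ioi 0, ENNReal.ofReal (∫ u in Ioc (cdf ρ s) 1, W u) := by
  rw [lintegral_ofReal_mul_eq_lintegral_setLIntegral_Ioi ρ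
    (G := fun r => ENNReal.ofReal (W (cdf ρ r)))
    (hWmeas.comp (continuous_cdf ρ).measurable).ennreal_ofReal]
  refine lintegral_congr fun s => ?_
  rw [setLIntegral_Ioi_comp_cdf ρ hWmeas.ennreal_ofReal, ofReal_integral_eq_lintegral_ofReal
    (hW.mono_set (Ioc_cdf_subset_Icc ρ s))
    (ae_restrict_of_forall_mem measurableSet_Ioc fun u hu => hWnn u (Ioc_cdf_subset_Icc ρ s hu))]

lemma PhiW_eq_integral_setIntegral_Ioc_cdf (hs : ρ (Iio 0) = 0) (hWmeas : Measurable W)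
    (hW : IntegrableOn W (Icc 0 1)) (hWnn : ∀ t ∈ Icc (0 : ℝ) 1, 0 ≤ W t) :
    PhiW W ρ = ∫ s in Ioi 0, ∫ u in Ioc (cdf ρ s) 1, W u := by
  have hpos : ∀ᵐ r ∂ρ, 0 ≤ r := by
    filter_upwards [measure_eq_zero_iff_ae_notMem.1 hs] with r hr
    simpa using hr
  rw [PhiW, integral_eq_lintegral_of_nonneg_ae
      (hpos.mono fun r hr => mul_nonneg hr (hWnn _ (cdf_mem_Icc ρ r)))
      (measurable_id.mul (hWmeas.comp (continuous_cdf ρ).measurable)).aestronglyMeasurable,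
    integral_eq_lintegral_of_nonneg_ae (ae_of_all _ (setIntegral_Ioc_cdf_nonneg hWnn))
      (antitone_setIntegral_Ioc_cdf hW hWnn).measurable.aestronglyMeasurable,
    ← lintegral_ofReal_mul_comp_cdf hWmeas hW hWnn]
  congr 1
  exact lintegral_congr_ae (hpos.mono fun r hr => ENNReal.ofReal_mul hr)

lemma integrableOn_setIntegral_Ioc_cdf (hint : Integrable (fun r : ℝ => r) ρ)
    (hWmeas : Measurable W) (hW : IntegrableOn W (Icc 0 1))
    (hWnn : ∀ t ∈ Icc (0 : ℝ) 1, 0 ≤ W t) {B : ℝ} (hWbd : ∀ t ∈ Icc (0 : ℝ) 1, W t ≤ B) :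
    IntegrableOn (fun s => ∫ u in Ioc (cdf ρ s) 1, W u) (Ioi 0) := by
  refine ⟨(antitone_setIntegral_Ioc_cdf hW hWnn).measurable.aestronglyMeasurable, ?_⟩
  rw [hasFiniteIntegral_iff_ofReal (ae_of_all _ (setIntegral_Ioc_cdf_nonneg hWnn)),
    ← lintegral_ofReal_mul_comp_cdf hWmeas hW hWnn]
  calc ∫⁻ r, ENNReal.ofReal r * ENNReal.ofReal (W (cdf ρ r)) ∂ρ
      ≤ ∫⁻ r, ENNReal.ofReal r * ENNReal.ofReal B ∂ρ :=
        lintegral_mono fun r => by gcongr; exact hWbd _ (cdf_mem_Icc ρ r)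
    _ = (∫⁻ r, ENNReal.ofReal r ∂ρ) * ENNReal.ofReal B :=
        lintegral_mul_const _ measurable_id.ennreal_ofReal
    _ < ⊤ := ENNReal.mul_lt_top hint.lintegral_lt_top ENNReal.ofReal_lt_top

end PhiW

/-- `Φ_W(ρ₁) - Φ_W(ρ₂) = -∫_0^∞ (K_W(F_{ρ₁}(r)) - K_W(F_{ρ₂}(r))) dr`,
where `K_W(t) = ∫_0^t W(u) du`, for non-atomic Borel probability measures on `[0,∞)`
with finite first moments and `W : [0,1] → [0,∞)` bounded and measurable. -/
theorem PhiW_difference_formula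
    (ρ₁ ρ₂ : Measure ℝ) [IsProbabilityMeasure ρ₁] [IsProbabilityMeasure ρ₂]
    [NullSingletonClass ρ₁] [NullSingletonClass ρ₂]
    (hs₁ : ρ₁ (Iio 0) = 0) (hs₂ : ρ₂ (Iio 0) = 0)
    (hint₁ : Integrable (fun r : ℝ => r) ρ₁) (hint₂ : Integrable (fun r : ℝ => r) ρ₂)
    (W : ℝ → ℝ) (hWmeas : Measurable W) (hWnn : ∀ t ∈ Icc (0 : ℝ) 1, 0 ≤ W t)
    (B : ℝ) (hWbd : ∀ t ∈ Icc (0 : ℝ) 1, W t ≤ B) :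
    PhiW W ρ₁ - PhiW W ρ₂ =
      -∫ r in Ioi (0 : ℝ),
        ((∫ u in (0 : ℝ)..(cdf ρ₁ r), W u) - ∫ u in (0 : ℝ)..(cdf ρ₂ r), W u) := by
  have hW : IntegrableOn W (Icc 0 1) :=
    Measure.integrableOn_of_bounded (M := B) measure_Icc_lt_top.ne hWmeas.aestronglyMeasurable
      (ae_restrict_of_forall_mem measurableSet_Icc fun t ht => by
        rw [Real.norm_of_nonneg (hWnn t ht)]; exact hWbd t ht)
  rw [PhiW_eq_integral_setIntegral_Ioc_cdf hs₁ hWmeas hW hWnn,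
    PhiW_eq_integral_setIntegral_Ioc_cdf hs₂ hWmeas hW hWnn,
    ← integral_sub (integrableOn_setIntegral_Ioc_cdf hint₁ hWmeas hW hWnn hWbd)
      (integrableOn_setIntegral_Ioc_cdf hint₂ hWmeas hW hWnn hWbd), ← integral_neg]
  refine setIntegral_congr_fun measurableSet_Ioi fun r _ => ?_
  rw [setIntegral_Ioc_eq_sub hW (cdf_mem_Icc ρ₁ r), setIntegral_Ioc_eq_sub hW (cdf_mem_Icc ρ₂ r)]
  ring
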